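/- Let (X, d_X) be an n-point metric space and Δ > 0. Define an equivalence relation on X by x ∼ y if there exist points x = x_0, x_1, ..., x_k = y in X with d_X(x_{i-1}, x_i) ≤ Δ/(2n) for all i. Let W be the set of equivalence classes, π : X → W the quotient map, and let d_{X/W} be the quotient metric on W, i.e. the maximal (pseudo)metric on W majorized by d_X: d_{X/W}(W,W') = min over finite chains V_0, ..., V_{m-1} ∈ W with V_0 = W, V_{m-1} = W' of Σ_{j=1}^{m-1} d_X(V_{j-1}, V_j), where d_X(V,V') = min{d_X(a,b) : a ∈ V, b ∈ V'}. Then for every x, y ∈ X: d_X(x,y) − Δ/2 ≤ d_{X/W}(π(x), π(y)) ≤ d_X(x,y). -/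

import Mathlib

/-- `d` is a metric on `X`. -/
def IsMetric {X : Type*} (d : X → X → ℝ) : Prop :=
  (∀ x y, 0 ≤ d x y) ∧ (∀ x y, d x y = 0 ↔ x = y) ∧
  (∀ x y, d x y = d y x) ∧ (∀ x y z, d x z ≤ d x y + d y z)

/-- The equivalence relation `x ∼ y`: there is a chain from `x` to `y` whose consecutive
steps all have length at most `ε`. -/
def ChainRel {X : Type*} (d : X → X → ℝ) (ε : ℝ) : X → X → Prop :=
  Relation.ReflTransGen (fun a b => d a b ≤ ε)

/-- The set of sums realizing the quotient distance between the classes of `x` and `y`: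
sums `∑ d(uᵢ, vᵢ)` over chains where `x ∼ u₀`, `vₖ ∼ y` and `vᵢ ∼ uᵢ₊₁` (moves within an
equivalence class are free, jumps between classes cost their distance). -/
def quotChainSums {X : Type*} (d : X → X → ℝ) (ε : ℝ) (x y : X) : Set ℝ :=
  { s : ℝ | ∃ (k : ℕ) (u v : Fin (k + 1) → X),
      ChainRel d ε x (u 0) ∧ ChainRel d ε (v (Fin.last k)) y ∧
      (∀ i : Fin k, ChainRel d ε (v i.castSucc) (u i.succ)) ∧
      s = ∑ i, d (u i) (v i) }

/-
Join two points of `X` when they are at distance at most `ε = Δ/(2n)` or form one of the jumps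
`(uᵢ, vᵢ)` of a chain in the quotient. The chain connects `x` to `y` in this graph, hence so does
a simple path. Along a simple path the triangle inequality bounds `d x y` by the lengths of its
edges; each jump occurs at most once, and there are at most `n - 1` short edges, which together
cost at most `(n - 1) ε ≤ Δ/2`.
-/

open Finset

namespace IsMetric

variable {X : Type*} {d : X → X → ℝ}

theorem nonneg (hd : IsMetric d) (x y : X) : 0 ≤ d x y := hd.1 x y

theorem self_eq_zero (hd : IsMetric d) (x : X) : d x x = 0 := (hd.2.1 x x).2 rfl

theorem symm (hd : IsMetric d) (x y : X) : d x y = d y x := hd.2.2.1 x y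

theorem triangle (hd : IsMetric d) (x y z : X) : d x z ≤ d x y + d y z := hd.2.2.2 x y z

def edgeLength (hd : IsMetric d) : Sym2 X → ℝ := Sym2.lift ⟨d, hd.symm⟩

@[simp]
theorem edgeLength_mk (hd : IsMetric d) (x y : X) : hd.edgeLength s(x, y) = d x y := rfl

theorem edgeLength_nonneg (hd : IsMetric d) (e : Sym2 X) : 0 ≤ hd.edgeLength e := by
  induction e using Sym2.ind with
  | _ x y => exact hd.nonneg x y

theorem le_sum_edgeLength {G : SimpleGraph X} (hd : IsMetric d) {a b : X} (w : G.Walk a b) :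
    d a b ≤ (w.edges.map hd.edgeLength).sum := by
  induction w with
  | nil => simp [hd.self_eq_zero]
  | cons _ p ih =>
    rename_i a b c _
    calc d a c ≤ d a b + d b c := hd.triangle a b c
      _ ≤ d a b + (p.edges.map hd.edgeLength).sum := by gcongr
      _ = _ := by simp

end IsMetric

section JumpGraph

variable {X ι : Type*} (d : X → X → ℝ) (ε : ℝ) (u v : ι → X)

def jumpGraph : SimpleGraph X :=
  SimpleGraph.fromRel fun a b => d a b ≤ ε ∨ ∃ i, u i = a ∧ v i = b

variable {d ε u v}

theorem jumpGraph_reachable_of_dist_le {a b : X} (h : d a b ≤ ε) :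
    (jumpGraph d ε u v).Reachable a b := by
  by_cases hab : a = b
  · exact hab ▸ .refl a
  · exact SimpleGraph.Adj.reachable (by simp [jumpGraph, hab, h])

theorem jumpGraph_reachable_jump (i : ι) : (jumpGraph d ε u v).Reachable (u i) (v i) := by
  by_cases huv : u i = v i
  · exact huv ▸ .refl _
  · refine SimpleGraph.Adj.reachable ?_
    simp only [jumpGraph, SimpleGraph.fromRel_adj]
    exact ⟨huv, .inl (.inr ⟨i, rfl, rfl⟩)⟩

theorem ChainRel.jumpGraph_reachable {a b : X} (h : ChainRel d ε a b) :
    (jumpGraph d ε u v).Reachable a b := by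
  induction h with
  | refl => exact .refl _
  | tail _ hbc ih => exact ih.trans (jumpGraph_reachable_of_dist_le hbc)

theorem edgeLength_le_or_eq_jump (hd : IsMetric d) {e : Sym2 X}
    (he : e ∈ (jumpGraph d ε u v).edgeSet) : hd.edgeLength e ≤ ε ∨ ∃ i, s(u i, v i) = e := by
  induction e using Sym2.ind with
  | _ a b =>
  simp only [jumpGraph, SimpleGraph.mem_edgeSet, SimpleGraph.fromRel_adj] at he
  rcases he.2 with (hab | ⟨i, rfl, rfl⟩) | (hba | ⟨i, rfl, rfl⟩)
  · exact .inl hab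
  · exact .inr ⟨i, rfl⟩
  · exact .inl (by rwa [IsMetric.edgeLength_mk, hd.symm])
  · exact .inr ⟨i, Sym2.eq_swap⟩

theorem sum_edgeLength_le_of_subset_edgeSet [Fintype ι] (hd : IsMetric d)
    (hε : 0 ≤ ε) {E : Finset (Sym2 X)} (hE : ∀ e ∈ E, e ∈ (jumpGraph d ε u v).edgeSet) :
    ∑ e ∈ E, hd.edgeLength e ≤ #E * ε + ∑ i, d (u i) (v i) := by
  classical
  rw [← sum_filter_add_sum_filter_not E (hd.edgeLength · ≤ ε)]
  gcongr ?_ + ?_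
  · calc ∑ e ∈ E with hd.edgeLength e ≤ ε, hd.edgeLength e
        ≤ #{e ∈ E | hd.edgeLength e ≤ ε} • ε :=
          sum_le_card_nsmul _ _ _ fun e he => (mem_filter.1 he).2
      _ ≤ #E * ε := by
          rw [nsmul_eq_mul]; exact mul_le_mul_of_nonneg_right (mod_cast card_filter_le _ _) hε
  · have hjump : E.filter (¬hd.edgeLength · ≤ ε) ⊆ univ.image fun i => s(u i, v i) := by
      intro e he
      obtain ⟨he, hlong⟩ := mem_filter.1 he
      simpa [hlong] using edgeLength_le_or_eq_jump hd (hE e he)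
    calc ∑ e ∈ E with ¬hd.edgeLength e ≤ ε, hd.edgeLength e
        ≤ ∑ e ∈ univ.image fun i => s(u i, v i), hd.edgeLength e :=
          sum_le_sum_of_subset_of_nonneg hjump fun e _ _ => hd.edgeLength_nonneg e
      _ ≤ ∑ i, d (u i) (v i) :=
          sum_image_le_of_nonneg fun e _ => hd.edgeLength_nonneg e

theorem dist_le_of_jumpGraph_reachable [Fintype X] [Fintype ι] (hd : IsMetric d) (hε : 0 ≤ ε)
    {x y : X} (h : (jumpGraph d ε u v).Reachable x y) :
    d x y ≤ (Fintype.card X - 1) * ε + ∑ i, d (u i) (v i) := by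
  classical
  obtain ⟨w⟩ := h
  set p := w.toPath
  have hlen : (p.1.length : ℝ) ≤ Fintype.card X - 1 := by
    rw [le_sub_iff_add_le]
    exact_mod_cast p.2.length_lt
  have hE : p.1.edges.toFinset.card = p.1.length := by
    rw [List.toFinset_card_of_nodup p.2.edges_nodup, SimpleGraph.Walk.length_edges]
  calc d x y ≤ (p.1.edges.map hd.edgeLength).sum := hd.le_sum_edgeLength p.1
    _ = ∑ e ∈ p.1.edges.toFinset, hd.edgeLength e := (List.sum_toFinset _ p.2.edges_nodup).symm
    _ ≤ p.1.length * ε + ∑ i, d (u i) (v i) := by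
      rw [← hE]
      exact sum_edgeLength_le_of_subset_edgeSet hd hε
        fun e he => p.1.edges_subset_edgeSet (List.mem_toFinset.1 he)
    _ ≤ (Fintype.card X - 1) * ε + ∑ i, d (u i) (v i) := by gcongr

theorem jumpGraph_reachable_of_chain {k : ℕ} {u v : Fin (k + 1) → X} {x y : X}
    (hx : ChainRel d ε x (u 0)) (hy : ChainRel d ε (v (Fin.last k)) y)
    (hs : ∀ i : Fin k, ChainRel d ε (v i.castSucc) (u i.succ)) :
    (jumpGraph d ε u v).Reachable x y := by
  have hv : ∀ j, (jumpGraph d ε u v).Reachable x (v j) := by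
    refine Fin.induction ?_ (fun j ih => ?_)
    · exact hx.jumpGraph_reachable.trans (jumpGraph_reachable_jump 0)
    · exact (ih.trans (hs j).jumpGraph_reachable).trans (jumpGraph_reachable_jump _)
  exact (hv _).trans hy.jumpGraph_reachable

end JumpGraph

/-- For the quotient of an `n`-point metric space by the equivalence relation generated by
pairs at distance at most `Δ/(2n)`, the quotient metric satisfies
`d(x,y) − Δ/2 ≤ d_{X/W}(π x, π y) ≤ d(x,y)`. -/
theorem quotient_metric_comparison
    (X : Type) [Fintype X] (d : X → X → ℝ) (hd : IsMetric d)
    (n : ℕ) (hn : Fintype.card X = n) (Δ : ℝ) (hΔ : 0 < Δ) :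
    ∀ x y : X,
      d x y - Δ / 2 ≤ sInf (quotChainSums d (Δ / (2 * n)) x y) ∧
      sInf (quotChainSums d (Δ / (2 * n)) x y) ≤ d x y := by
  intro x y
  set ε := Δ / (2 * (n : ℝ))
  have hε : 0 ≤ ε := by positivity
  have hnε : (Fintype.card X - 1) * ε ≤ Δ / 2 := by
    have hn0 : (n : ℝ) ≠ 0 := by rw [← hn]; exact_mod_cast (Fintype.card_pos_iff.2 ⟨x⟩).ne'
    have hnε_eq : (n : ℝ) * ε = Δ / 2 := by simp only [ε]; field_simp
    rw [hn]; linarith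
  have hmem : d x y ∈ quotChainSums d ε x y :=
    ⟨0, fun _ => x, fun _ => y, .refl, .refl, Fin.elim0, by simp⟩
  refine ⟨le_csInf ⟨_, hmem⟩ ?_, csInf_le ⟨0, ?_⟩ hmem⟩
  · rintro s ⟨k, u, v, hx, hy, hs, rfl⟩
    have hdist := dist_le_of_jumpGraph_reachable hd hε (jumpGraph_reachable_of_chain hx hy hs)
    linarith
  · rintro s ⟨k, u, v, -, -, -, rfl⟩
    exact sum_nonneg fun i _ => hd.nonneg _ _
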